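/- Let R be a commutative ring, k ≥ 1 and q ≥ 1 integers, n = q·k, and f, g ∈ R[X] of degree < n. For 0 ≤ i < q set F_i = (f quo X^{ki}) mod X^k and G_i = (g quo X^{ki}) mod X^k. Then the top k coefficients of the low short product of f and g are given by a tiling into low and high short products of the blocks: ((f·g) mod X^n) quo X^{n−k} = Σ_{i+j = q−1} ((F_i·G_j) mod X^k) + Σ_{i+j = q−2} ((F_i·G_j) quo X^k), where the first sum is over pairs (i,j) with 0 ≤ i,j < q and i+j = q−1, and the second over pairs with 0 ≤ i,j < q and i+j = q−2 (empty if q = 1). -/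

import Mathlib

/-!
Cutting `f` and `g` into the `k`-blocks `F i`, `G j` gives
`f * g = ∑ X^(k(i+j)) (F i G j mod X^k) + X^(k(i+j+1)) (F i G j quo X^k)`, a sum of terms
`X^(k b) h` with `deg h < k`. The coefficients of such a term in the window `[(q-1)k, qk)` are
those of `h` if `b = q - 1` and zero otherwise, so exactly the low products with `i + j = q - 1`
and the high products with `i + j = q - 2` survive.
-/

open Polynomial

namespace Polynomial

open Finset

variable {R : Type*} [CommRing R]

theorem coeff_modByMonic_X_pow (p : R[X]) (t n : ℕ) :
    (p %ₘ X ^ t).coeff n = if n < t then p.coeff n else 0 := by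
  nontriviality R
  have h := congrArg (coeff · n) (modByMonic_add_div p (X ^ t))
  simp only [coeff_add, coeff_X_pow_mul'] at h
  by_cases hn : n < t
  · rw [if_pos hn]
    rwa [if_neg (not_le.2 hn), add_zero] at h
  · rw [if_neg hn]
    have hdeg : (p %ₘ X ^ t).degree < t := by
      simpa using degree_modByMonic_lt p (monic_X_pow t)
    exact coeff_eq_zero_of_degree_lt (hdeg.trans_le (by exact_mod_cast not_lt.1 hn))

theorem coeff_divByMonic_X_pow (p : R[X]) (t n : ℕ) :
    (p /ₘ X ^ t).coeff n = p.coeff (n + t) := by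
  have h := congrArg (coeff · (n + t)) (modByMonic_add_div p (X ^ t))
  simpa [coeff_modByMonic_X_pow, coeff_X_pow_mul'] using h

theorem degree_modByMonic_X_pow_lt (p : R[X]) (t : ℕ) : (p %ₘ X ^ t).degree < t := by
  rw [degree_lt_iff_coeff_zero]
  intro m hm
  rw [coeff_modByMonic_X_pow, if_neg (not_lt.2 hm)]

theorem degree_divByMonic_X_pow_lt {p : R[X]} {d t : ℕ} (hp : p.degree < (d + t : ℕ)) :
    (p /ₘ X ^ t).degree < d := by
  rw [degree_lt_iff_coeff_zero]
  intro m hm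
  rw [coeff_divByMonic_X_pow]
  exact coeff_eq_zero_of_degree_lt (hp.trans_le (by exact_mod_cast Nat.add_le_add_right hm t))

theorem degree_mul_divByMonic_X_pow_lt {a b : R[X]} {k : ℕ} (ha : a.degree < k)
    (hb : b.degree < k) : ((a * b) /ₘ X ^ k).degree < k := by
  refine degree_divByMonic_X_pow_lt ((degree_mul_le a b).trans_lt ?_)
  rcases eq_or_ne a 0 with rfl | ha0
  · simp
  · push_cast
    exact WithBot.add_lt_add_of_le_of_lt (degree_ne_bot.2 ha0) ha.le hb

theorem modByMonic_X_pow_eq_self {p : R[X]} {t : ℕ} (hp : p.degree < t) : p %ₘ X ^ t = p := by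
  ext n
  rw [coeff_modByMonic_X_pow, ite_eq_left_iff, not_lt]
  exact fun hn => (coeff_eq_zero_of_degree_lt (hp.trans_le (by exact_mod_cast hn))).symm

theorem modByMonic_X_pow_add (p : R[X]) (a b : ℕ) :
    p %ₘ X ^ (a + b) = p %ₘ X ^ a + X ^ a * ((p /ₘ X ^ a) %ₘ X ^ b) := by
  ext n
  simp only [coeff_add, coeff_X_pow_mul', coeff_modByMonic_X_pow, coeff_divByMonic_X_pow]
  split_ifs <;> grind

theorem sum_X_pow_mul_blocks (p : R[X]) (k m : ℕ) :
    ∑ i ∈ range m, X ^ (k * i) * ((p /ₘ X ^ (k * i)) %ₘ X ^ k) = p %ₘ X ^ (k * m) := by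
  induction m with
  | zero => simp
  | succ m ih => rw [sum_range_succ, ih, mul_add_one, modByMonic_X_pow_add]

theorem sum_X_pow_mul_mul_sum_X_pow_mul (k m : ℕ) (F G : ℕ → R[X]) :
    (∑ i ∈ range m, X ^ (k * i) * F i) * (∑ j ∈ range m, X ^ (k * j) * G j) =
      ∑ ij ∈ range m ×ˢ range m,
        (X ^ (k * (ij.1 + ij.2)) * ((F ij.1 * G ij.2) %ₘ X ^ k)
          + X ^ (k * (ij.1 + ij.2 + 1)) * ((F ij.1 * G ij.2) /ₘ X ^ k)) := by
  rw [sum_mul_sum, ← sum_product']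
  refine sum_congr rfl fun ij _ => ?_
  linear_combination
    -(X ^ (k * (ij.1 + ij.2)) : R[X]) * modByMonic_add_div (F ij.1 * G ij.2) (X ^ k)

theorem coeff_X_pow_mul_block {h : R[X]} {k n : ℕ} (hh : h.degree < k) (hn : n < k) (b c : ℕ) :
    (X ^ (k * b) * h).coeff (n + k * c) = if b = c then h.coeff n else 0 := by
  rw [coeff_X_pow_mul']
  rcases lt_trichotomy b c with hbc | rfl | hbc
  · have : k * b + k ≤ k * c := by simpa [mul_add_one] using Nat.mul_le_mul_left k hbc
    rw [if_pos (by omega), if_neg hbc.ne,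
      coeff_eq_zero_of_degree_lt (hh.trans_le (by exact_mod_cast (by omega)))]
  · rw [if_pos (by omega), if_pos rfl, Nat.add_sub_cancel]
  · have : k * c + k ≤ k * b := by simpa [mul_add_one] using Nat.mul_le_mul_left k hbc
    rw [if_neg (by omega), if_neg hbc.ne']

end Polynomial

theorem short_product_block_tiling_general
    {R : Type*} [CommRing R] (k q : ℕ) (hq : 1 ≤ q)
    (f g : R[X]) (hf : f.degree < (q * k : ℕ)) (hg : g.degree < (q * k : ℕ)) :
    ((f * g) %ₘ X ^ (q * k)) /ₘ X ^ (q * k - k) =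
      (∑ p ∈ (Finset.range q ×ˢ Finset.range q).filter (fun p => p.1 + p.2 + 1 = q),
          (((f /ₘ X ^ (k * p.1)) %ₘ X ^ k) * ((g /ₘ X ^ (k * p.2)) %ₘ X ^ k)) %ₘ X ^ k)
      + ∑ p ∈ (Finset.range q ×ˢ Finset.range q).filter (fun p => p.1 + p.2 + 2 = q),
          (((f /ₘ X ^ (k * p.1)) %ₘ X ^ k) * ((g /ₘ X ^ (k * p.2)) %ₘ X ^ k)) /ₘ X ^ k := by
  obtain ⟨c, rfl⟩ : ∃ c, q = c + 1 := ⟨q - 1, by omega⟩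
  have hfg := sum_X_pow_mul_mul_sum_X_pow_mul k (c + 1)
    (fun i => (f /ₘ X ^ (k * i)) %ₘ X ^ k) (fun j => (g /ₘ X ^ (k * j)) %ₘ X ^ k)
  rw [sum_X_pow_mul_blocks, sum_X_pow_mul_blocks, mul_comm k (c + 1),
    modByMonic_X_pow_eq_self hf, modByMonic_X_pow_eq_self hg] at hfg
  have hlo (i j : ℕ) := degree_modByMonic_X_pow_lt
    ((f /ₘ X ^ (k * i)) %ₘ X ^ k * ((g /ₘ X ^ (k * j)) %ₘ X ^ k)) k
  have hhi (i j : ℕ) := degree_mul_divByMonic_X_pow_lt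
    (degree_modByMonic_X_pow_lt (f /ₘ X ^ (k * i)) k)
    (degree_modByMonic_X_pow_lt (g /ₘ X ^ (k * j)) k)
  rw [add_one_mul, Nat.add_sub_cancel, hfg]
  ext n
  rw [coeff_divByMonic_X_pow, coeff_modByMonic_X_pow]
  simp only [coeff_add, finsetSum_coeff]
  by_cases hn : n < k
  · rw [if_pos (by omega), Finset.sum_filter, Finset.sum_filter, ← Finset.sum_add_distrib]
    refine Finset.sum_congr rfl fun ij _ => ?_
    have hc₁ : ij.1 + ij.2 + 1 = c + 1 ↔ ij.1 + ij.2 = c := by omega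
    have hc₂ : ij.1 + ij.2 + 2 = c + 1 ↔ ij.1 + ij.2 + 1 = c := by omega
    rw [mul_comm c k, coeff_X_pow_mul_block (hlo _ _) hn, coeff_X_pow_mul_block (hhi _ _) hn]
    simp only [hc₁, hc₂]
  · have hk : (k : WithBot ℕ) ≤ n := by exact_mod_cast not_lt.1 hn
    rw [if_neg (by omega),
      Finset.sum_eq_zero fun _ _ => coeff_eq_zero_of_degree_lt ((hlo _ _).trans_le hk),
      Finset.sum_eq_zero fun _ _ => coeff_eq_zero_of_degree_lt ((hhi _ _).trans_le hk), add_zero]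

/-- For a commutative ring `R`, `k ≥ 1`, `q ≥ 1`, `n = q·k`, and
`f g : R[X]` of degree `< n`, with blocks `F i = (f quo X^{k·i}) mod X^k` and
`G j = (g quo X^{k·j}) mod X^k`, the top `k` coefficients of the low short product
are given by the tiling
`((f·g) mod X^n) quo X^{n−k} = Σ_{i+j=q−1} (F_i·G_j mod X^k) + Σ_{i+j=q−2} (F_i·G_j quo X^k)`,
where both sums range over pairs `(i,j)` with `0 ≤ i,j < q` (the second sum being empty
when `q = 1`). -/
theorem short_product_block_tiling
    {R : Type*} [CommRing R] (k q : ℕ) (hk : 1 ≤ k) (hq : 1 ≤ q)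
    (f g : R[X]) (hf : f.degree < (q * k : ℕ)) (hg : g.degree < (q * k : ℕ)) :
    ((f * g) %ₘ X ^ (q * k)) /ₘ X ^ (q * k - k) =
      (∑ p ∈ (Finset.range q ×ˢ Finset.range q).filter (fun p => p.1 + p.2 + 1 = q),
          (((f /ₘ X ^ (k * p.1)) %ₘ X ^ k) * ((g /ₘ X ^ (k * p.2)) %ₘ X ^ k)) %ₘ X ^ k)
      + ∑ p ∈ (Finset.range q ×ˢ Finset.range q).filter (fun p => p.1 + p.2 + 2 = q),
          (((f /ₘ X ^ (k * p.1)) %ₘ X ^ k) * ((g /ₘ X ^ (k * p.2)) %ₘ X ^ k)) /ₘ X ^ k :=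
  short_product_block_tiling_general k q hq f g hf hg
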